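/- arXiv:1906.03371 — 5 statements merged into one kernel-verified Lean document; each statement's English description precedes it below -/
import Mathlib

section
/- Let Θ₁ and Θ₂ be positive definite p×p matrices with ‖Θ₁ − Θ₂‖_op ≤ λ_min(Θ₂)/2, where λ_min(Θ₂) is the smallest eigenvalue of Θ₂. Then the Kullback–Leibler divergence between the centered Gaussians N(0, Θ₁⁻¹) and N(0, Θ₂⁻¹) satisfies KL(N(0,Θ₁⁻¹) ‖ N(0,Θ₂⁻¹)) ≤ ‖Θ₁ − Θ₂‖_F² / λ_min(Θ₂)². -/
open Matrix MeasureTheory Finset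

/-- Operator (spectral) norm of a real square matrix. -/
noncomputable def opNorm {p : ℕ} (M : Matrix (Fin p) (Fin p) ℝ) : ℝ :=
  ‖Matrix.toEuclideanCLM (𝕜 := ℝ) M‖

/-- Squared Frobenius norm. -/
noncomputable def frobSq {p : ℕ} (M : Matrix (Fin p) (Fin p) ℝ) : ℝ :=
  ∑ i, ∑ j, (M i j) ^ 2

/-- KL divergence between the centered Gaussians `N(0, Θ₁⁻¹)` and `N(0, Θ₂⁻¹)`,
expressed through the precision matrices. -/
noncomputable def klGauss {p : ℕ} (Θ₁ Θ₂ : Matrix (Fin p) (Fin p) ℝ) : ℝ :=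
  (1 / 2) * ((Θ₁⁻¹ * (Θ₂ - Θ₁)).trace - Real.log Θ₂.det + Real.log Θ₁.det)

/-- Smallest eigenvalue of a Hermitian (real symmetric) matrix. -/
noncomputable def lambdaMin {p : ℕ} {M : Matrix (Fin p) (Fin p) ℝ}
    (hM : M.IsHermitian) : ℝ :=
  ⨅ i, hM.eigenvalues i

/-!
Whitening by `S = Θ₂^{-1/2}` turns the divergence into the spectral sum
`½ ∑ (bᵢ⁻¹ - 1 + log bᵢ)` over the eigenvalues `bᵢ` of `B = S Θ₁ S`. The operator-norm hypothesis
gives `Θ₂ / 2 ≤ Θ₁` in the Loewner order, hence `B ≥ 1/2`, and on `[1/2, ∞)` one has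
`b⁻¹ - 1 + log b ≤ 2 (b - 1)²`. The divergence is therefore at most
`tr ((B - 1)²) = tr (D Θ₂⁻¹ D Θ₂⁻¹)` with `D = Θ₁ - Θ₂`, and `Θ₂⁻¹ ≤ λ_min⁻¹` bounds this
by `‖D‖_F² / λ_min²`.
-/

open scoped MatrixOrder

section Spectral

variable {n : Type*} [Fintype n]

theorem Matrix.trace_mono {X Y : Matrix n n ℝ} (h : X ≤ Y) : X.trace ≤ Y.trace := by
  simpa [trace_sub] using (le_iff.mp h).trace_nonneg

variable [DecidableEq n]

theorem Matrix.trace_mul_le_trace_mul {P X Y : Matrix n n ℝ} (hP : 0 ≤ P) (hXY : X ≤ Y) :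
    (P * X).trace ≤ (P * Y).trace := by
  obtain ⟨C, rfl⟩ := CStarAlgebra.nonneg_iff_eq_star_mul_self.mp hP
  rw [mul_assoc, trace_mul_comm, mul_assoc _ _ Y, trace_mul_comm (star C)]
  exact trace_mono (star_right_conjugate_le_conjugate hXY C)

section SquareRootOfInverse

variable {S M : Matrix n n ℝ} (hM : IsUnit M) (hS : S * S = M⁻¹)
include hM hS

theorem Matrix.isUnit_of_mul_self_eq_inv : IsUnit S :=
  isUnit_of_mul_isUnit_left (hS ▸ isUnit_nonsing_inv_iff.mpr hM)

theorem Matrix.inv_mul_inv_of_mul_self_eq_inv : S⁻¹ * S⁻¹ = M := by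
  rw [← Matrix.mul_inv_rev, hS, nonsing_inv_nonsing_inv _ ((isUnit_iff_isUnit_det M).mp hM)]

theorem Matrix.mul_mul_eq_one_of_mul_self_eq_inv : S * M * S = 1 := by
  have hSu := (isUnit_iff_isUnit_det S).mp (isUnit_of_mul_self_eq_inv hM hS)
  rw [← inv_mul_inv_of_mul_self_eq_inv hM hS, ← mul_assoc, mul_nonsing_inv _ hSu, one_mul,
    nonsing_inv_mul _ hSu]

end SquareRootOfInverse

namespace Matrix.IsHermitian

variable {A : Matrix n n ℝ} (hA : A.IsHermitian)
include hA

theorem algebraMap_le_iff_le_eigenvalues {r : ℝ} :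
    algebraMap ℝ _ r ≤ A ↔ ∀ i, r ≤ hA.eigenvalues i := by
  rw [algebraMap_le_iff_le_spectrum (a := A) hA.isSelfAdjoint,
    hA.spectrum_real_eq_range_eigenvalues]
  simp

theorem trace_cfc (f : ℝ → ℝ) : (cfc f A).trace = ∑ i, f (hA.eigenvalues i) := by
  rw [hA.cfc_eq, IsHermitian.cfc, Unitary.conjStarAlgAut_apply, trace_mul_cycle,
    Unitary.coe_star_mul_self, one_mul, trace_diagonal]
  simp

theorem trace_inv (h : ∀ i, hA.eigenvalues i ≠ 0) :
    A⁻¹.trace = ∑ i, (hA.eigenvalues i)⁻¹ := by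
  have hu : IsUnit A := by
    rw [isUnit_iff_isUnit_det, hA.det_eq_prod_eigenvalues]
    simpa using prod_ne_zero_iff.mpr fun i _ => h i
  rw [← hA.trace_cfc, ← hu.unit_spec, cfc_inv_id hu.unit, coe_units_inv]

theorem trace_sub_one_mul_self :
    ((A - 1) * (A - 1)).trace = ∑ i, (hA.eigenvalues i - 1) ^ 2 := by
  rw [← hA.trace_cfc (fun x => (x - 1) ^ 2), cfc_pow .., cfc_sub .., cfc_id' ..,
    cfc_const_one .., sq]

end Matrix.IsHermitian

theorem Matrix.trace_conj_mul_self_le {S D : Matrix n n ℝ} {c : ℝ} (hc : 0 < c)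
    (hS : IsSelfAdjoint S) (hD : IsSelfAdjoint D) (hSS : c • (S * S) ≤ 1) :
    ((S * D * S) * (S * D * S)).trace ≤ (D * D).trace / c ^ 2 := by
  set M := S * S
  have hM : 0 ≤ M := by simpa [M, hS.star_eq] using star_mul_self_nonneg S
  have key : ∀ P, 0 ≤ P → c * (P * M).trace ≤ P.trace := fun P hP => by
    simpa [trace_smul] using trace_mul_le_trace_mul hP hSS
  have hDMD : 0 ≤ D * M * D := hD.conjugate_nonneg hM
  have hDD : 0 ≤ D * D := by simpa [hD.star_eq] using star_mul_self_nonneg D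
  have hcyc : ((S * D * S) * (S * D * S)).trace = (D * M * D * M).trace := by
    simp only [M, mul_assoc]
    rw [trace_mul_comm]
    simp only [mul_assoc]
  rw [hcyc, le_div_iff₀ (by positivity)]
  calc (D * M * D * M).trace * c ^ 2 = c * (c * (D * M * D * M).trace) := by ring
    _ ≤ c * (D * M * D).trace := by gcongr; exact key _ hDMD
    _ = c * (D * D * M).trace := by rw [trace_mul_cycle]
    _ ≤ (D * D).trace := key _ hDD

end Spectral

theorem inv_sub_one_add_log_le {b : ℝ} (hb : 2⁻¹ ≤ b) :
    b⁻¹ - 1 + Real.log b ≤ 2 * (b - 1) ^ 2 := by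
  have hb0 : 0 < b := by linarith
  have hlog := Real.log_le_sub_one_of_pos hb0
  have hinv : b⁻¹ - 1 + (b - 1) = (b - 1) ^ 2 / b := by field_simp; ring
  have hdiv : (b - 1) ^ 2 / b ≤ 2 * (b - 1) ^ 2 := by
    rw [div_le_iff₀ hb0]
    nlinarith [sq_nonneg (b - 1)]
  linarith

section Gaussian

variable {p : ℕ}

theorem frobSq_eq_trace_conjTranspose_mul (M : Matrix (Fin p) (Fin p) ℝ) :
    frobSq M = (Mᴴ * M).trace := by
  simp only [frobSq, trace, Matrix.diag, mul_apply, conjTranspose_apply, star_trivial, sq]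
  exact sum_comm

open scoped Matrix.Norms.L2Operator in
theorem algebraMap_neg_opNorm_le [Nonempty (Fin p)] {A : Matrix (Fin p) (Fin p) ℝ}
    (hA : A.IsHermitian) : algebraMap ℝ _ (-opNorm A) ≤ A := by
  rw [hA.algebraMap_le_iff_le_eigenvalues, opNorm, l2_opNorm_toEuclideanCLM]
  intro i
  have := spectrum.norm_le_norm_of_mem (hA.eigenvalues_mem_spectrum_real i)
  rw [Real.norm_eq_abs] at this
  linarith [neg_abs_le (hA.eigenvalues i)]

theorem algebraMap_lambdaMin_le {M : Matrix (Fin p) (Fin p) ℝ} (hM : M.IsHermitian) :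
    algebraMap ℝ _ (lambdaMin hM) ≤ M :=
  hM.algebraMap_le_iff_le_eigenvalues.mpr fun i => ciInf_le (Set.finite_range _).bddBelow i

theorem lambdaMin_pos [Nonempty (Fin p)] {M : Matrix (Fin p) (Fin p) ℝ} (hM : M.PosDef) :
    0 < lambdaMin hM.1 := by
  obtain ⟨i, hi⟩ := Finite.exists_min hM.1.eigenvalues
  exact (hM.eigenvalues_pos i).trans_le (le_ciInf hi)

theorem half_smul_le_of_opNorm_sub_le [Nonempty (Fin p)] {Θ₁ Θ₂ : Matrix (Fin p) (Fin p) ℝ}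
    {μ : ℝ} (h1 : Θ₁.IsHermitian) (h2 : Θ₂.IsHermitian) (hμ : algebraMap ℝ _ μ ≤ Θ₂)
    (hop : opNorm (Θ₁ - Θ₂) ≤ μ / 2) : (2⁻¹ : ℝ) • Θ₂ ≤ Θ₁ := by
  calc (2⁻¹ : ℝ) • Θ₂ = Θ₂ - (2⁻¹ : ℝ) • Θ₂ := by module
    _ ≤ Θ₂ - (2⁻¹ : ℝ) • algebraMap ℝ _ μ := by gcongr
    _ = Θ₂ + algebraMap ℝ _ (-(μ / 2)) := by
        simp only [Algebra.algebraMap_eq_smul_one]; module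
    _ ≤ Θ₂ + algebraMap ℝ _ (-opNorm (Θ₁ - Θ₂)) := by
        gcongr
    _ ≤ Θ₂ + (Θ₁ - Θ₂) := by gcongr; exact algebraMap_neg_opNorm_le (h1.sub h2)
    _ = Θ₁ := add_sub_cancel _ _

theorem klGauss_eq_sum_eigenvalues {Θ₁ Θ₂ S : Matrix (Fin p) (Fin p) ℝ} (h1 : Θ₁.PosDef)
    (h2 : Θ₂.PosDef) (hS : S * S = Θ₂⁻¹) (hB : (S * Θ₁ * S).IsHermitian)
    (hpos : ∀ i, 0 < hB.eigenvalues i) :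
    klGauss Θ₁ Θ₂ = 2⁻¹ * ∑ i, ((hB.eigenvalues i)⁻¹ - 1 + Real.log (hB.eigenvalues i)) := by
  set B := S * Θ₁ * S
  have htrace : (Θ₁⁻¹ * (Θ₂ - Θ₁)).trace = B⁻¹.trace - p := by
    rw [mul_sub, trace_sub, nonsing_inv_mul _ ((isUnit_iff_isUnit_det _).mp h1.isUnit),
      trace_one, Fintype.card_fin, Matrix.mul_inv_rev, Matrix.mul_inv_rev, ← mul_assoc,
      trace_mul_cycle, inv_mul_inv_of_mul_self_eq_inv h2.isUnit hS, trace_mul_comm]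
  have hdet : B.det = Θ₁.det / Θ₂.det := by
    have hSdet : S.det * S.det = Θ₂.det⁻¹ := by
      rw [← det_mul, hS, det_nonsing_inv, Ring.inverse_eq_inv']
    rw [det_mul, det_mul, div_eq_mul_inv, ← hSdet]
    ring
  have hlog : Real.log Θ₁.det - Real.log Θ₂.det = ∑ i, Real.log (hB.eigenvalues i) := by
    rw [← Real.log_div h1.det_pos.ne' h2.det_pos.ne', ← hdet, hB.det_eq_prod_eigenvalues]
    simpa using Real.log_prod fun i _ => (hpos i).ne'
  rw [sum_add_distrib, sum_sub_distrib, ← hB.trace_inv fun i => (hpos i).ne', ← hlog, klGauss,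
    htrace]
  simp
  ring

theorem stmt_2 {p : ℕ} (Θ₁ Θ₂ : Matrix (Fin p) (Fin p) ℝ)
    (h1 : Θ₁.PosDef) (h2 : Θ₂.PosDef)
    (hop : opNorm (Θ₁ - Θ₂) ≤ lambdaMin h2.1 / 2) :
    klGauss Θ₁ Θ₂ ≤ frobSq (Θ₁ - Θ₂) / (lambdaMin h2.1) ^ 2 := by
  rcases isEmpty_or_nonempty (Fin p) with hp | hp
  -- for `p = 0` the empty infimum `lambdaMin h2.1` is the junk value `0`, and both sides vanish
  · simp [klGauss, frobSq]
  set μ := lambdaMin h2.1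
  set S := CFC.sqrt Θ₂⁻¹
  have hS : IsSelfAdjoint S := .of_nonneg (CFC.sqrt_nonneg _)
  have hSS : S * S = Θ₂⁻¹ := CFC.sqrt_mul_sqrt_self _ h2.inv.posSemidef.nonneg
  have hSΘ₂S : S * Θ₂ * S = 1 := mul_mul_eq_one_of_mul_self_eq_inv h2.isUnit hSS
  have hB : (S * Θ₁ * S).IsHermitian := h1.1.isSelfAdjoint.conjugate_self hS
  have hhalf : ∀ i, 2⁻¹ ≤ hB.eigenvalues i := by
    rw [← hB.algebraMap_le_iff_le_eigenvalues]
    simpa [hSΘ₂S, Algebra.algebraMap_eq_smul_one] using hS.conjugate_le_conjugate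
      (half_smul_le_of_opNorm_sub_le h1.1 h2.1 (algebraMap_lambdaMin_le h2.1) hop)
  have hBsub : S * Θ₁ * S - 1 = S * (Θ₁ - Θ₂) * S := by rw [mul_sub, sub_mul, hSΘ₂S]
  have hμS : μ • (S * S) ≤ 1 := by
    simpa [hSΘ₂S, Algebra.algebraMap_eq_smul_one] using
      hS.conjugate_le_conjugate (algebraMap_lambdaMin_le h2.1)
  calc klGauss Θ₁ Θ₂
      = 2⁻¹ * ∑ i, ((hB.eigenvalues i)⁻¹ - 1 + Real.log (hB.eigenvalues i)) :=
        klGauss_eq_sum_eigenvalues h1 h2 hSS hB fun i => by linarith [hhalf i]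
    _ ≤ 2⁻¹ * ∑ i, 2 * (hB.eigenvalues i - 1) ^ 2 := by
        gcongr with i
        exact inv_sub_one_add_log_le (hhalf i)
    _ = ((S * (Θ₁ - Θ₂) * S) * (S * (Θ₁ - Θ₂) * S)).trace := by
        rw [← hBsub, hB.trace_sub_one_mul_self, ← mul_sum]; ring
    _ ≤ frobSq (Θ₁ - Θ₂) / μ ^ 2 := by
        rw [frobSq_eq_trace_conjTranspose_mul, (h1.1.sub h2.1).eq]
        exact trace_conj_mul_self_le (lambdaMin_pos h2) hS (h1.1.sub h2.1) hμS
end Gaussian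
end

section
/- For positive definite matrices Θ₁, Θ₂ of the same size, the KL divergence between N(0,Θ₁⁻¹) and N(0,Θ₂⁻¹) equals (1/4)·Tr(Θ̃⁻¹(Θ₂−Θ₁)Θ̃⁻¹(Θ₂−Θ₁)) for some Θ̃ = tΘ₁ + (1−t)Θ₂ with t ∈ [0,1]. -/
open Matrix MeasureTheory Finset

/-! Along the segment `Θ(s) = Θ₁ + s (Θ₂ - Θ₁)` the function `g(s) = -log det Θ(s)` has
`g'(s) = -tr(Θ(s)⁻¹ H)` and `g''(s) = tr(Θ(s)⁻¹ H Θ(s)⁻¹ H)` with `H = Θ₂ - Θ₁`, and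
`2 KL = g(1) - g(0) - g'(0)`. Taylor's theorem with Lagrange remainder gives
`g(1) - g(0) - g'(0) = g''(c) / 2` for some `c ∈ (0, 1)`, and `Θ(c)` is the required `Θ̃` with
`t = 1 - c`. Positive definiteness of the whole segment keeps `det Θ(s) > 0`, so `g` is smooth. -/

open Polynomial Set
open scoped Matrix.Norms.Operator

theorem taylor_mean_remainder_lagrange_one {g g' g'' : ℝ → ℝ} {a b : ℝ}
    (hab : a < b) (hg : ∀ x ∈ Icc a b, HasDerivAt g (g' x) x)
    (hg' : ∀ x ∈ Icc a b, HasDerivAt g' (g'' x) x) :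
    ∃ c ∈ Ioo a b, g b - g a - g' a * (b - a) = g'' c * (b - a) ^ 2 / 2 := by
  set F : ℝ → ℝ := fun x => g b - g x - g' x * (b - x)
  set ψ : ℝ → ℝ := fun x => (b - x) ^ 2
  have hF : ∀ x ∈ Icc a b, HasDerivAt F (-(g'' x * (b - x))) x := fun x hx => by
    refine (((hg x hx).const_sub (g b)).sub
      ((hg' x hx).mul ((hasDerivAt_id x).const_sub b))).congr_deriv ?_
    simp only [id]; ring
  have hψ : ∀ x, HasDerivAt ψ (-(2 * (b - x))) x := fun x => by
    refine (((hasDerivAt_id x).const_sub b).pow 2).congr_deriv ?_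
    simp only [id]; ring
  obtain ⟨c, hc, hmvt⟩ := exists_ratio_hasDerivAt_eq_ratio_slope F _ hab
    (fun x hx => (hF x hx).continuousAt.continuousWithinAt)
    (fun x hx => hF x (Ioo_subset_Icc_self hx))
    ψ _ (fun x _ => (hψ x).continuousAt.continuousWithinAt) (fun x _ => hψ x)
  refine ⟨c, hc, mul_right_cancel₀ (sub_ne_zero.2 hc.2.ne') ?_⟩
  simp only [F, ψ, sub_self, mul_zero, ne_eq, OfNat.ofNat_ne_zero, not_false_eq_true,
    zero_pow] at hmvt
  linear_combination (-1 / 2 : ℝ) * hmvt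

theorem Matrix.PosDef.smul_add_smul {n : Type*} {A B : Matrix n n ℝ} (hA : A.PosDef)
    (hB : B.PosDef) {a b : ℝ} (ha : 0 ≤ a) (hb : 0 ≤ b) (hab : 0 < a + b) :
    (a • A + b • B).PosDef := by
  rcases ha.lt_or_eq with ha | rfl
  · exact (hA.smul ha).add_posSemidef (hB.posSemidef.smul hb)
  · simpa using hB.smul (by simpa using hab)

section Jacobi

variable {𝕜 : Type*} [NontriviallyNormedField 𝕜] {n : Type*} [Fintype n] [DecidableEq n]

theorem Matrix.hasDerivAt_det_one_add_smul (B : Matrix n n 𝕜) :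
    HasDerivAt (fun ε : 𝕜 => (1 + ε • B).det) B.trace 0 := by
  set P : 𝕜[X] := det (1 + (X : 𝕜[X]) • B.map C)
  have hP : (fun ε : 𝕜 => (1 + ε • B).det) = fun ε => P.eval ε := by
    funext ε
    simp only [P]
    rw [← coe_evalRingHom, RingHom.map_det]
    congr 1
    ext i j
    simp only [add_apply, one_apply, smul_apply, smul_eq_mul, RingHom.mapMatrix_apply,
      coe_evalRingHom, map_apply, X_mul_C, eval_add, eval_mul, eval_C, eval_X]
    split_ifs <;> simp [mul_comm]
  rw [hP, ← derivative_det_one_add_X_smul B]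
  exact P.hasDerivAt 0

theorem Matrix.hasDerivAt_det_add_smul (A H : Matrix n n 𝕜) {s : 𝕜}
    (hs : IsUnit (A + s • H).det) :
    HasDerivAt (fun s : 𝕜 => (A + s • H).det)
      ((A + s • H).det * ((A + s • H)⁻¹ * H).trace) s := by
  set M := A + s • H
  have hfactor : ∀ r : 𝕜, A + r • H = M * (1 + (r - s) • (M⁻¹ * H)) := fun r => by
    rw [mul_add, mul_one, Matrix.mul_smul, mul_nonsing_inv_cancel_left _ _ hs]
    module
  simp only [hfactor, det_mul]
  have h := HasDerivAt.comp_sub_const s s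
    (by rw [sub_self]; exact hasDerivAt_det_one_add_smul (M⁻¹ * H))
  simpa using h.const_mul M.det

end Jacobi

theorem HasDerivAt.matrix_trace {𝕜 : Type*} [NontriviallyNormedField 𝕜] [CompleteSpace 𝕜]
    {n : Type*} [Fintype n] {f : 𝕜 → Matrix n n 𝕜} {f' : Matrix n n 𝕜} {x : 𝕜}
    (hf : HasDerivAt f f' x) : HasDerivAt (fun s => (f s).trace) f'.trace x :=
  (traceLinearMap n 𝕜 𝕜).toContinuousLinearMap.hasFDerivAt.comp_hasDerivAt x hf

section Inverse

variable {𝕜 : Type*} [RCLike 𝕜] {n : Type*} [Fintype n] [DecidableEq n]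

theorem HasDerivAt.matrix_inv {f : 𝕜 → Matrix n n 𝕜} {f' : Matrix n n 𝕜} {x : 𝕜}
    (hf : HasDerivAt f f' x) (hx : IsUnit (f x).det) :
    HasDerivAt (fun s => (f s)⁻¹) (-((f x)⁻¹ * f' * (f x)⁻¹)) x := by
  have : CompleteSpace (Matrix n n 𝕜) := FiniteDimensional.complete 𝕜 _
  obtain ⟨u, hu⟩ := (isUnit_iff_isUnit_det _).mpr hx
  have hinv := hasFDerivAt_ringInverse (𝕜 := 𝕜) u
  rw [hu] at hinv
  have h := hinv.comp_hasDerivAt x hf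
  simp only [Function.comp_def, ← nonsing_inv_eq_ringInverse, hu, coe_units_inv,
    _root_.neg_apply, ContinuousLinearMap.mulLeftRight_apply] at h
  exact h

theorem Matrix.hasDerivAt_trace_inv_add_smul_mul (A H : Matrix n n 𝕜) {s : 𝕜}
    (hs : IsUnit (A + s • H).det) :
    HasDerivAt (fun s => ((A + s • H)⁻¹ * H).trace)
      (-((A + s • H)⁻¹ * H * (A + s • H)⁻¹ * H).trace) s := by
  have hline := ((hasDerivAt_id s).smul_const H).const_add A
  rw [one_smul] at hline
  simpa [Matrix.mul_assoc] using ((hline.matrix_inv hs).mul_const H).matrix_trace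

end Inverse

theorem Matrix.hasDerivAt_log_det_add_smul {n : Type*} [Fintype n] [DecidableEq n]
    (A H : Matrix n n ℝ) {s : ℝ} (hs : (A + s • H).det ≠ 0) :
    HasDerivAt (fun s => Real.log (A + s • H).det) ((A + s • H)⁻¹ * H).trace s := by
  have h := (hasDerivAt_det_add_smul A H hs.isUnit).log hs
  rwa [mul_div_cancel_left₀ _ hs] at h

theorem stmt_3 {p : ℕ} (Θ₁ Θ₂ : Matrix (Fin p) (Fin p) ℝ)
    (h1 : Θ₁.PosDef) (h2 : Θ₂.PosDef) :
    ∃ t ∈ Set.Icc (0 : ℝ) 1,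
      klGauss Θ₁ Θ₂ =
        (1 / 4) * ((t • Θ₁ + (1 - t) • Θ₂)⁻¹ * (Θ₂ - Θ₁) *
          (t • Θ₁ + (1 - t) • Θ₂)⁻¹ * (Θ₂ - Θ₁)).trace := by
  set H := Θ₂ - Θ₁
  have hdet : ∀ s ∈ Icc (0 : ℝ) 1, (Θ₁ + s • H).det ≠ 0 := fun s hs => by
    have hΘ : Θ₁ + s • H = (1 - s) • Θ₁ + s • Θ₂ := by module
    rw [hΘ]
    exact (h1.smul_add_smul h2 (by linarith [hs.2]) hs.1 (by norm_num)).det_pos.ne'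
  obtain ⟨c, hc, hTaylor⟩ := taylor_mean_remainder_lagrange_one zero_lt_one
    (g := fun s => -Real.log (Θ₁ + s • H).det)
    (fun s hs => (hasDerivAt_log_det_add_smul Θ₁ H (hdet s hs)).neg)
    (fun s hs => (hasDerivAt_trace_inv_add_smul_mul Θ₁ H (hdet s hs).isUnit).neg)
  refine ⟨1 - c, ⟨by linarith [hc.2], by linarith [hc.1]⟩, ?_⟩
  have hΘc : (1 - c) • Θ₁ + (1 - (1 - c)) • Θ₂ = Θ₁ + c • H := by module
  have hΘ₂ : Θ₁ + H = Θ₂ := add_sub_cancel Θ₁ Θ₂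
  simp only [hΘc, zero_smul, add_zero, one_smul, neg_neg, hΘ₂] at hTaylor ⊢
  rw [klGauss, show Θ₂ - Θ₁ = H from rfl]
  linarith
end

section
/- Let m ≥ 1 and 1 ≤ d ≤ m/2 be integers. Then there exist M matrices H₁,…,H_M with entries in {0,1} of size m×m such that: (i) every row of each H_i has at most d nonzero entries; (ii) the Hamming distance between any two distinct H_i, H_j is at least md/2; and (iii) log M ≥ (md/16)·log(1 + m/(2d)). -/
/-
Gilbert–Varshamov argument on the code of `m`-tuples of `d`-subsets of `Fin m` (the supports of the
rows). A maximal code with pairwise row-overlap `≤ 3md/4` (equivalently Hamming distance `≥ md/2`)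
covers the whole space by its balls, so its size is at least `C(m,d)^m / (ball size)`. A ball is
bounded by an exponential moment: with `λ = m/d`, summing `λ^(overlap)` over all tuples factors
over the rows, and for a single row `∑_a λ^#(x ∩ a) ≤ C(m,d) (2 - d/m)^d` by expanding
`λ^k = ∑_{T ⊆ x ∩ a} (λ - 1)^#T` and counting supersets of `T`. This gives
`λ^(3md/4) ≤ M (2 - d/m)^(md)`, and an elementary inequality in `p = d/m ≤ 1/2` turns it into the
stated logarithmic bound.
-/

open Matrix MeasureTheory Finset

/-- Hamming distance between two square matrices: the number of entries where they differ. -/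
noncomputable def hammingDistM {m : ℕ} (A B : Matrix (Fin m) (Fin m) ℝ) : ℕ :=
  (Finset.univ.filter fun ij : Fin m × Fin m => A ij.1 ij.2 ≠ B ij.1 ij.2).card

open scoped symmDiff

/- Weighted AM-GM for `2p` and `2(2 - p)/3` with weights `11/27, 16/27` (the arithmetic mean is
at most `1` for `p ≤ 1/2`) gives `p ^ 11 * (2 - p) ^ 16 ≤ 3 ^ 16 / 2 ^ 27`. -/
theorem pow_eleven_mul_two_sub_pow_sixteen_le_one {p : ℝ} (hp : 0 ≤ p) (hp2 : p ≤ 1 / 2) :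
    p ^ 11 * (2 - p) ^ 16 ≤ 1 := by
  have ha : 0 ≤ 2 * p := by linarith
  have hb : 0 ≤ 2 / 3 * (2 - p) := by linarith
  have amgm := Real.geom_mean_le_arith_mean2_weighted (w₁ := 11 / 27) (w₂ := 16 / 27)
    (by norm_num) (by norm_num) ha hb (by norm_num)
  have hgm : (2 * p) ^ (11 / 27 : ℝ) * (2 / 3 * (2 - p)) ^ (16 / 27 : ℝ) ≤ 1 := by linarith
  have h27 := pow_le_one₀ (n := 27) (by positivity) hgm
  rw [mul_pow, ← Real.rpow_mul_natCast ha, ← Real.rpow_mul_natCast hb] at h27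
  norm_num at h27
  nlinarith [pow_nonneg hp 11, pow_nonneg (by linarith : (0:ℝ) ≤ 2 - p) 16]

theorem log_one_add_inv_two_mul_div_sixteen_le {p : ℝ} (hp : 0 < p) (hp2 : p ≤ 1 / 2) :
    Real.log (1 + (2 * p)⁻¹) / 16 ≤ 3 / 4 * Real.log p⁻¹ - Real.log (2 - p) := by
  have h1 : Real.log (1 + (2 * p)⁻¹) ≤ Real.log p⁻¹ := by
    apply Real.log_le_log (by positivity)
    rw [mul_inv, ← sub_nonneg]
    have : p⁻¹ - (1 + 2⁻¹ * p⁻¹) = (1 - 2 * p) / (2 * p) := by field_simp; ring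
    rw [this]
    exact div_nonneg (by linarith) (by positivity)
  have h2 : 16 * Real.log (2 - p) ≤ 11 * Real.log p⁻¹ := by
    have hle : (2 - p) ^ 16 ≤ p⁻¹ ^ 11 := by
      rw [inv_pow, ← one_div, le_div_iff₀ (by positivity), mul_comm]
      exact pow_eleven_mul_two_sub_pow_sixteen_le_one hp.le hp2
    have := Real.log_le_log (pow_pos (by linarith) _) hle
    rw [Real.log_pow, Real.log_pow] at this
    push_cast at this
    linarith
  linarith

theorem Nat.choose_sub_sub_le_choose_mul_div_pow {n d t : ℕ} (htd : t ≤ d) (hdn : d ≤ n) :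
    ((n - t).choose (d - t) : ℝ) ≤ n.choose d * ((d : ℝ) / n) ^ t := by
  induction t with
  | zero => simp
  | succ t ih =>
    obtain ⟨a, ha⟩ : ∃ a, n - t = a + 1 := ⟨n - (t + 1), by omega⟩
    obtain ⟨b, hb⟩ : ∃ b, d - t = b + 1 := ⟨d - (t + 1), by omega⟩
    have hn : (0 : ℝ) < n := by exact_mod_cast (show 0 < n by omega)
    have hna : (n : ℝ) - t = a + 1 := by
      rw [← Nat.cast_sub (by omega), ha]; push_cast; ring
    have hdb : (d : ℝ) - t = b + 1 := by
      rw [← Nat.cast_sub (by omega), hb]; push_cast; ring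
    have hpascal : ((a + 1 : ℕ) : ℝ) * a.choose b = (a + 1).choose (b + 1) * (b + 1 : ℕ) := by
      exact_mod_cast Nat.add_one_mul_choose_eq a b
    have hratio : ((b : ℝ) + 1) / (a + 1) ≤ d / n := by
      rw [div_le_div_iff₀ (by positivity) hn, ← hna, ← hdb]
      have : (d : ℝ) ≤ n := by exact_mod_cast hdn
      nlinarith [(t.cast_nonneg : (0 : ℝ) ≤ t)]
    rw [show n - (t + 1) = a by omega, show d - (t + 1) = b by omega]
    calc (a.choose b : ℝ) = (b + 1) / (a + 1) * (n - t).choose (d - t) := by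
          rw [ha, hb, div_mul_eq_mul_div, eq_div_iff (by positivity)]
          push_cast at hpascal ⊢
          linarith
      _ ≤ d / n * (n.choose d * ((d : ℝ) / n) ^ t) :=
          mul_le_mul hratio (ih (by omega)) (by positivity) (by positivity)
      _ = n.choose d * ((d : ℝ) / n) ^ (t + 1) := by ring

theorem Finset.card_symmDiff_add_two_mul_card_inter {α : Type*} [DecidableEq α]
    (s t : Finset α) : #(s ∆ t) + 2 * #(s ∩ t) = #s + #t := by
  rw [Finset.symmDiff_def, card_union_of_disjoint disjoint_sdiff_sdiff]
  have := card_sdiff_add_card_inter s t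
  have := card_sdiff_add_card_inter t s
  rw [inter_comm t s] at this
  omega

theorem Finset.sum_powersetCard_pow_card_inter_le {α : Type*} [Fintype α] [DecidableEq α]
    {d : ℕ} (hd : d ≤ Fintype.card α) {l : ℝ} (hl : 1 ≤ l) {x : Finset α} (hx : #x ≤ d) :
    ∑ a ∈ powersetCard d univ, l ^ #(x ∩ a)
      ≤ (Fintype.card α).choose d * (1 + (l - 1) * (d / Fintype.card α)) ^ #x := by
  set n := Fintype.card α
  have hexpand : ∀ a : Finset α,
      l ^ #(x ∩ a) = ∑ T ∈ x.powerset, if T ⊆ a then (l - 1) ^ #T else 0 := by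
    intro a
    rw [← sum_filter, show x.powerset.filter (· ⊆ a) = (x ∩ a).powerset by
      ext T; simp only [mem_filter, mem_powerset, subset_inter_iff]]
    simpa using (sum_pow_mul_eq_add_pow (l - 1) 1 (x ∩ a)).symm
  have hcount : ∀ T ∈ x.powerset, ∑ a ∈ powersetCard d univ, (if T ⊆ a then (l - 1) ^ #T else 0)
      ≤ n.choose d * ((l - 1) * (d / n)) ^ #T := by
    intro T hT
    have hTd : #T ≤ d := (card_le_card (mem_powerset.mp hT)).trans hx
    rw [← sum_filter, sum_const, nsmul_eq_mul,
      card_filter_powersetCard_subset T univ d (subset_univ T) hTd, card_univ]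
    calc ((n - #T).choose (d - #T) : ℝ) * (l - 1) ^ #T
        ≤ n.choose d * ((d : ℝ) / n) ^ #T * (l - 1) ^ #T :=
          mul_le_mul_of_nonneg_right
            (Nat.choose_sub_sub_le_choose_mul_div_pow hTd hd) (pow_nonneg (by linarith) _)
      _ = n.choose d * ((l - 1) * (d / n)) ^ #T := by rw [mul_pow]; ring
  calc ∑ a ∈ powersetCard d univ, l ^ #(x ∩ a)
      = ∑ T ∈ x.powerset, ∑ a ∈ powersetCard d univ, if T ⊆ a then (l - 1) ^ #T else 0 := by
        simp only [hexpand]; exact sum_comm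
    _ ≤ ∑ T ∈ x.powerset, n.choose d * ((l - 1) * (d / n)) ^ #T := sum_le_sum hcount
    _ = n.choose d * (1 + (l - 1) * (d / n)) ^ #x := by
        rw [← mul_sum, add_comm, ← sum_pow_mul_eq_add_pow]
        simp

theorem Finset.exists_maximal_separated {β : Type*} [DecidableEq β] (S : Finset β)
    (r : β → β → Prop) [DecidableRel r] (hrefl : ∀ x ∈ S, r x x)
    (hsymm : ∀ x y, r x y → r y x) :
    ∃ C ⊆ S, (∀ u ∈ C, ∀ v ∈ C, u ≠ v → ¬ r u v) ∧ ∀ y ∈ S, ∃ x ∈ C, r x y := by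
  set F := S.powerset.filter fun C => ∀ u ∈ C, ∀ v ∈ C, u ≠ v → ¬ r u v
  obtain ⟨C, hCF, hCmax⟩ := F.exists_max_image card ⟨∅, by simp [F]⟩
  obtain ⟨hCS, hsep⟩ := mem_filter.mp hCF
  refine ⟨C, mem_powerset.mp hCS, hsep, fun y hy => ?_⟩
  by_cases hyC : y ∈ C
  · exact ⟨y, hyC, hrefl y hy⟩
  have hins : insert y C ∉ F := fun hmem => by
    have := hCmax _ hmem
    rw [card_insert_of_notMem hyC] at this
    omega
  simp only [F, mem_filter, mem_powerset, insert_subset_iff, not_and, not_forall,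
    not_not] at hins
  obtain ⟨u, hu, v, hv, huv, hr⟩ := hins ⟨hy, mem_powerset.mp hCS⟩
  rw [mem_insert] at hu hv
  rcases hu with rfl | hu <;> rcases hv with rfl | hv
  · exact absurd rfl huv
  · exact ⟨v, hv, hsymm _ _ hr⟩
  · exact ⟨u, hu, hr⟩
  · exact absurd hr (hsep u hu v hv huv)

theorem Finset.exists_separated_card_le_mul {β : Type*} [DecidableEq β] (S : Finset β)
    (r : β → β → Prop) [DecidableRel r] (hrefl : ∀ x ∈ S, r x x)
    (hsymm : ∀ x y, r x y → r y x) {B : ℝ}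
    (hB : ∀ x ∈ S, (#{y ∈ S | r x y} : ℝ) ≤ B) :
    ∃ C ⊆ S, (∀ u ∈ C, ∀ v ∈ C, u ≠ v → ¬ r u v) ∧ (#S : ℝ) ≤ #C * B := by
  obtain ⟨C, hCS, hsep, hcover⟩ := S.exists_maximal_separated r hrefl hsymm
  refine ⟨C, hCS, hsep, ?_⟩
  have hS : S ⊆ C.biUnion fun x => {y ∈ S | r x y} := fun y hy => by
    obtain ⟨x, hx, hxy⟩ := hcover y hy
    exact mem_biUnion.mpr ⟨x, hx, mem_filter.mpr ⟨hy, hxy⟩⟩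
  calc (#S : ℝ) ≤ ∑ x ∈ C, (#{y ∈ S | r x y} : ℝ) := by
        exact_mod_cast (card_le_card hS).trans card_biUnion_le
    _ ≤ ∑ _x ∈ C, B := sum_le_sum fun x hx => hB x (hCS hx)
    _ = #C * B := by rw [sum_const, nsmul_eq_mul]

section Overlap

variable {ι α : Type*} [Fintype ι] [DecidableEq α]

def overlap (x y : ι → Finset α) : ℕ := ∑ i, #(x i ∩ y i)

theorem overlap_comm (x y : ι → Finset α) : overlap x y = overlap y x := by
  simp only [overlap, inter_comm]

theorem card_filter_le_overlap_mul_rpow_le [DecidableEq ι] [Fintype α] {d : ℕ}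
    (hd : d ≤ Fintype.card α) {l : ℝ} (hl : 1 ≤ l) {x : ι → Finset α} (hx : ∀ i, #(x i) = d)
    (t : ℝ) :
    #{y ∈ Fintype.piFinset fun _ => powersetCard d univ | t ≤ overlap x y} * l ^ t
      ≤ ((Fintype.card α).choose d * (1 + (l - 1) * (d / Fintype.card α)) ^ d)
          ^ Fintype.card ι := by
  set T := Fintype.piFinset fun _ : ι => powersetCard d (univ : Finset α)
  calc #{y ∈ T | t ≤ overlap x y} * l ^ t
      = ∑ y ∈ T with t ≤ overlap x y, l ^ t := by rw [sum_const, nsmul_eq_mul]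
    _ ≤ ∑ y ∈ T with t ≤ overlap x y, l ^ overlap x y := sum_le_sum fun y hy => by
        rw [← Real.rpow_natCast]
        exact Real.rpow_le_rpow_of_exponent_le hl (mem_filter.mp hy).2
    _ ≤ ∑ y ∈ T, l ^ overlap x y :=
        sum_le_sum_of_subset_of_nonneg (filter_subset _ _) fun _ _ _ => by positivity
    _ = ∏ i, ∑ a ∈ powersetCard d univ, l ^ #(x i ∩ a) := by
        rw [prod_univ_sum]
        simp only [overlap, prod_pow_eq_pow_sum]
        rfl
    _ ≤ ∏ _i : ι, (Fintype.card α).choose d * (1 + (l - 1) * (d / Fintype.card α)) ^ d :=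
        prod_le_prod (fun _ _ => sum_nonneg fun _ _ => by positivity) fun i _ =>
          hx i ▸ sum_powersetCard_pow_card_inter_le hd hl (hx i).le
    _ = _ := by rw [prod_const, card_univ]

end Overlap

def indicatorMatrix {m : ℕ} (x : Fin m → Finset (Fin m)) : Matrix (Fin m) (Fin m) ℝ :=
  Matrix.of fun i j => if j ∈ x i then 1 else 0

@[simp]
theorem indicatorMatrix_apply {m : ℕ} (x : Fin m → Finset (Fin m)) (i j : Fin m) :
    indicatorMatrix x i j = if j ∈ x i then 1 else 0 := rfl

theorem hammingDistM_indicatorMatrix {m : ℕ} (x y : Fin m → Finset (Fin m)) :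
    hammingDistM (indicatorMatrix x) (indicatorMatrix y) = ∑ i, #(x i ∆ y i) := by
  rw [hammingDistM, card_filter, Fintype.sum_prod_type]
  refine sum_congr rfl fun i _ => ?_
  rw [← filter_univ_mem (x i ∆ y i), card_filter]
  refine sum_congr rfl fun j _ => ?_
  by_cases hx : j ∈ x i <;> by_cases hy : j ∈ y i <;> simp [hx, hy, mem_symmDiff]

theorem indicatorMatrix_eq_zero_or_eq_one {m : ℕ} (x : Fin m → Finset (Fin m)) (i j : Fin m) :
    indicatorMatrix x i j = 0 ∨ indicatorMatrix x i j = 1 := by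
  rw [indicatorMatrix_apply]
  split_ifs <;> simp

theorem card_filter_indicatorMatrix_ne_zero {m : ℕ} (x : Fin m → Finset (Fin m)) (i : Fin m) :
    #{j | indicatorMatrix x i j ≠ 0} = #(x i) := by
  congr 1
  ext j
  by_cases hj : j ∈ x i <;> simp [hj]

theorem hammingDistM_indicatorMatrix_add_two_mul_overlap {m d : ℕ}
    {x y : Fin m → Finset (Fin m)} (hx : ∀ i, #(x i) = d) (hy : ∀ i, #(y i) = d) :
    hammingDistM (indicatorMatrix x) (indicatorMatrix y) + 2 * overlap x y = 2 * (m * d) := by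
  rw [hammingDistM_indicatorMatrix, overlap, mul_sum, ← sum_add_distrib]
  simp only [card_symmDiff_add_two_mul_card_inter, hx, hy, sum_const, card_univ,
    Fintype.card_fin, smul_eq_mul]
  ring

theorem exists_large_overlap_separated_subset_piFinset {ι α : Type*} [Fintype ι] [DecidableEq ι]
    [Nonempty ι] [Fintype α] [DecidableEq α] {d : ℕ} (hd : 1 ≤ d) (hdn : 2 * d ≤ Fintype.card α) :
    ∃ C ⊆ Fintype.piFinset fun _ : ι => powersetCard d (univ : Finset α),
      (∀ x ∈ C, ∀ y ∈ C, x ≠ y → 4 * overlap x y ≤ 3 * (Fintype.card ι * d)) ∧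
      ((Fintype.card α : ℝ) / d) ^ (3 * (Fintype.card ι * d : ℝ) / 4)
        ≤ #C * (2 - (d : ℝ) / Fintype.card α) ^ (Fintype.card ι * d) := by
  set r := Fintype.card ι
  set n := Fintype.card α
  set S := Fintype.piFinset fun _ : ι => powersetCard d (univ : Finset α)
  set l : ℝ := n / d
  set t : ℝ := 3 * (r * d : ℝ) / 4
  have hn : (0 : ℝ) < n := by exact_mod_cast (show 0 < n by omega)
  have hd' : (0 : ℝ) < d := by exact_mod_cast hd
  have hl : 1 ≤ l := by
    rw [le_div_iff₀ hd', one_mul]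
    exact_mod_cast (show d ≤ n by omega)
  have hrows : ∀ x ∈ S, ∀ i, #(x i) = d := fun x hx i =>
    (mem_powersetCard.mp (Fintype.mem_piFinset.mp hx i)).2
  have hbase : 1 + (l - 1) * (d / n) = 2 - (d : ℝ) / n := by
    simp only [l]; field_simp; ring
  have hball : ∀ x ∈ S, (#{y ∈ S | 3 * (r * d) < 4 * overlap x y} : ℝ)
      ≤ (n.choose d * (2 - (d : ℝ) / n) ^ d) ^ r / l ^ t := by
    intro x hx
    rw [le_div_iff₀ (by positivity), ← hbase]
    refine le_trans ?_ (card_filter_le_overlap_mul_rpow_le (by omega) hl (hrows x hx) t)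
    gcongr with y
    intro hy
    rw [div_le_iff₀ (by norm_num)]
    exact_mod_cast (by omega : 3 * (r * d) ≤ overlap x y * 4)
  obtain ⟨C, hCS, hsep, hcard⟩ := S.exists_separated_card_le_mul
    (fun x y => 3 * (r * d) < 4 * overlap x y)
    (fun x hx => by
      simp only [overlap, inter_self, hrows x hx, sum_const, card_univ, smul_eq_mul]
      have : 0 < r * d := Nat.mul_pos Fintype.card_pos hd
      change 3 * (r * d) < 4 * (r * d)
      omega)
    (fun x y hxy => by rwa [overlap_comm]) hball
  refine ⟨C, hCS, fun x hx y hy hxy => not_lt.mp (hsep x hx y hy hxy), ?_⟩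
  have hS : (#S : ℝ) = n.choose d ^ r := by
    rw [Fintype.card_piFinset, prod_const, card_powersetCard, card_univ]
    push_cast
    rfl
  have hN : (0 : ℝ) < n.choose d ^ r := by
    have := Nat.choose_pos (show d ≤ n by omega)
    positivity
  rw [hS, mul_div_assoc', le_div_iff₀ (by positivity), mul_pow, ← pow_mul, mul_comm d r] at hcard
  refine le_of_mul_le_mul_left ?_ hN
  linarith

theorem le_log_of_rpow_le_mul_pow {m d : ℕ} (hd : 1 ≤ d) (hdm : 2 * d ≤ m) {M : ℝ}
    (h : ((m : ℝ) / d) ^ (3 * (m * d : ℝ) / 4) ≤ M * (2 - (d : ℝ) / m) ^ (m * d)) :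
    (m * d : ℝ) / 16 * Real.log (1 + (m : ℝ) / (2 * d)) ≤ Real.log M := by
  have hd' : (0 : ℝ) < d := by exact_mod_cast hd
  have hm : (0 : ℝ) < m := by exact_mod_cast (show 0 < m by omega)
  set p : ℝ := d / m
  have hp : 0 < p := by positivity
  have hp2 : p ≤ 1 / 2 := by
    rw [div_le_iff₀ hm]
    have : (2 * d : ℝ) ≤ m := by exact_mod_cast hdm
    linarith
  have hq : 0 < (2 - p) ^ (m * d) := pow_pos (by linarith) _
  have hinv : (m : ℝ) / d = p⁻¹ := (inv_div _ _).symm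
  have hinv2 : (m : ℝ) / (2 * d) = (2 * p)⁻¹ := by simp only [p]; field_simp
  rw [hinv] at h
  have hpos : 0 < p⁻¹ ^ (3 * (m * d : ℝ) / 4) := by positivity
  have hM : 0 < M := pos_of_mul_pos_left (hpos.trans_le h) hq.le
  have hlog := Real.log_le_log hpos h
  rw [Real.log_rpow (by positivity), Real.log_mul hM.ne' hq.ne', Real.log_pow] at hlog
  have key := mul_le_mul_of_nonneg_left (log_one_add_inv_two_mul_div_sixteen_le hp hp2)
    (by positivity : (0 : ℝ) ≤ m * d)
  rw [hinv2]
  push_cast at hlog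
  linarith

theorem stmt_5_general (m d : ℕ) (hd : 1 ≤ d) (hdm : 2 * d ≤ m) :
    ∃ (M : ℕ) (H : Fin M → Matrix (Fin m) (Fin m) ℝ),
      (∀ a i j, H a i j = 0 ∨ H a i j = 1) ∧
      (∀ a i, (Finset.univ.filter fun j => H a i j ≠ 0).card ≤ d) ∧
      (∀ a b, a ≠ b → (m * d : ℝ) / 2 ≤ (hammingDistM (H a) (H b) : ℝ)) ∧
      (m * d : ℝ) / 16 * Real.log (1 + (m : ℝ) / (2 * d)) ≤ Real.log M := by
  have : Nonempty (Fin m) := ⟨⟨0, by omega⟩⟩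
  obtain ⟨C, hCS, hsep, hsize⟩ :=
    exists_large_overlap_separated_subset_piFinset (ι := Fin m) (α := Fin m) hd
      (by simpa using hdm)
  simp only [Fintype.card_fin] at hsep hsize
  have hrows : ∀ x ∈ C, ∀ i, #(x i) = d := fun x hx i =>
    (mem_powersetCard.mp (Fintype.mem_piFinset.mp (hCS hx) i)).2
  obtain ⟨x, hxC, hxinj⟩ : ∃ x : Fin #C → Fin m → Finset (Fin m),
      (∀ a, x a ∈ C) ∧ Function.Injective x :=
    ⟨fun a => C.equivFin.symm a, fun a => (C.equivFin.symm a).2,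
      Subtype.val_injective.comp C.equivFin.symm.injective⟩
  refine ⟨#C, fun a => indicatorMatrix (x a), fun a => indicatorMatrix_eq_zero_or_eq_one (x a),
    fun a i => ?_, fun a b hab => ?_, le_log_of_rpow_le_mul_pow hd hdm hsize⟩
  · rw [card_filter_indicatorMatrix_ne_zero, hrows _ (hxC a)]
  · have hdist := hammingDistM_indicatorMatrix_add_two_mul_overlap
      (hrows _ (hxC a)) (hrows _ (hxC b))
    have hfar := hsep _ (hxC a) _ (hxC b) (hxinj.ne hab)
    rw [div_le_iff₀ two_pos]
    exact_mod_cast (by omega :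
      m * d ≤ hammingDistM (indicatorMatrix (x a)) (indicatorMatrix (x b)) * 2)

theorem stmt_5 (m d : ℕ) (hm : 1 ≤ m) (hd : 1 ≤ d) (hdm : 2 * d ≤ m) :
    ∃ (M : ℕ) (H : Fin M → Matrix (Fin m) (Fin m) ℝ),
      (∀ a i j, H a i j = 0 ∨ H a i j = 1) ∧
      (∀ a i, (Finset.univ.filter fun j => H a i j ≠ 0).card ≤ d) ∧
      (∀ a b, a ≠ b → (m * d : ℝ) / 2 ≤ (hammingDistM (H a) (H b) : ℝ)) ∧
      (m * d : ℝ) / 16 * Real.log (1 + (m : ℝ) / (2 * d)) ≤ Real.log M :=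
  stmt_5_general m d hd hdm
end

section
/- Let B* be a p×p real matrix with ‖B*‖_op < 1 and zero diagonal, and set A = (I − B*)⁻¹. Let H be a p×p matrix with zero diagonal and set G = H·A. Write G_D for the diagonal part of G and G_{D^c} for the off-diagonal part. Then ‖G‖_F² ≤ 2‖G_{D^c}‖_F². -/
open Matrix MeasureTheory Finset

/-!
Since `H = G (1 - B)` and `B` have zero diagonals, `G i i = (G B) i i = (G_off B) i i`, where
`G_off` is the off-diagonal part of `G`. By Cauchy–Schwarz, `(G i i)²` is at most the squared norm
of row `i` of `G_off` times the squared norm of column `i` of `B`, and the latter is at most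
`‖B‖_op² ≤ 1`; now sum over `i`.
-/

namespace Matrix

variable {n : Type*} [Fintype n] [DecidableEq n]

theorem isUnit_one_sub_of_norm_toEuclideanCLM_lt_one {𝕜 : Type*} [RCLike 𝕜]
    {B : Matrix n n 𝕜} (hB : ‖toEuclideanCLM (𝕜 := 𝕜) B‖ < 1) : IsUnit (1 - B) := by
  have : IsUnit (1 - toEuclideanCLM (𝕜 := 𝕜) B) := (Units.oneSub _ hB).isUnit
  rw [← map_one (toEuclideanCLM (n := n) (𝕜 := 𝕜)), ← map_sub] at this
  exact (isUnit_map_iff _ _).mp this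

theorem sum_norm_sq_col_le_sq_norm_toEuclideanCLM {𝕜 : Type*} [RCLike 𝕜]
    (B : Matrix n n 𝕜) (i : n) : ∑ k, ‖B k i‖ ^ 2 ≤ ‖toEuclideanCLM (𝕜 := 𝕜) B‖ ^ 2 := by
  set T := toEuclideanCLM (n := n) (𝕜 := 𝕜) B
  calc ∑ k, ‖B k i‖ ^ 2 = ‖T (WithLp.toLp 2 (Pi.single i 1))‖ ^ 2 := by
        simp [T, EuclideanSpace.norm_sq_eq]
    _ ≤ ‖T‖ ^ 2 := by
        gcongr
        simpa using T.le_opNorm (WithLp.toLp 2 (Pi.single i 1))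

theorem apply_self_eq_offDiag_mul_apply_self {R : Type*} [Ring R] {G B H : Matrix n n R}
    (hGB : G * (1 - B) = H) (hB : ∀ i, B i i = 0) (hH : ∀ i, H i i = 0) (i : n) :
    G i i = ((G - diagonal fun j => G j j) * B) i i := by
  have hG : G = H + G * B := by rw [← hGB, mul_sub, mul_one, sub_add_cancel]
  calc G i i = (G * B) i i := by
        conv_lhs => rw [hG]
        rw [add_apply, hH, zero_add]
    _ = ((G - diagonal fun j => G j j) * B) i i := by
        rw [sub_mul, sub_apply, diagonal_mul, hB, mul_zero, sub_zero]

theorem sq_apply_self_le_sum_sq_offDiag {G B H : Matrix n n ℝ}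
    (hGB : G * (1 - B) = H) (hB : ∀ i, B i i = 0) (hH : ∀ i, H i i = 0) (i : n)
    (hcol : ∑ k, B k i ^ 2 ≤ 1) :
    G i i ^ 2 ≤ ∑ j, (G - diagonal fun j => G j j) i j ^ 2 := by
  set Goff := G - diagonal fun j => G j j
  calc G i i ^ 2 = (∑ k, Goff i k * B k i) ^ 2 := by
        rw [apply_self_eq_offDiag_mul_apply_self hGB hB hH i, mul_apply]
    _ ≤ (∑ k, Goff i k ^ 2) * ∑ k, B k i ^ 2 := sum_mul_sq_le_sq_mul_sq _ _ _
    _ ≤ ∑ k, Goff i k ^ 2 :=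
        mul_le_of_le_one_right (sum_nonneg fun _ _ => sq_nonneg _) hcol

end Matrix

theorem frobSq_eq_sum_sq_diag_add_frobSq_offDiag {p : ℕ} (G : Matrix (Fin p) (Fin p) ℝ) :
    frobSq G = ∑ i, G i i ^ 2 + frobSq (G - diagonal fun i => G i i) := by
  have hdiag : ∑ i, G i i ^ 2 = frobSq (diagonal fun i => G i i) := by
    simp [frobSq, diagonal_apply]
  rw [hdiag, frobSq, frobSq, frobSq, ← sum_add_distrib]
  refine sum_congr rfl fun i _ => ?_
  rw [← sum_add_distrib]
  refine sum_congr rfl fun j _ => ?_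
  by_cases hij : i = j
  · subst hij; simp
  · simp [diagonal_apply_ne _ hij]

theorem frobSq_le_two_mul_frobSq_offDiag {p : ℕ} {G : Matrix (Fin p) (Fin p) ℝ}
    (hG : ∀ i, G i i ^ 2 ≤ ∑ j, (G - diagonal fun j => G j j) i j ^ 2) :
    frobSq G ≤ 2 * frobSq (G - diagonal fun i => G i i) := by
  rw [frobSq_eq_sum_sq_diag_add_frobSq_offDiag, two_mul]
  gcongr
  exact sum_le_sum fun i _ => hG i

theorem stmt_8 {p : ℕ} (Bstar H : Matrix (Fin p) (Fin p) ℝ)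
    (hBdiag : ∀ i, Bstar i i = 0) (hBop : opNorm Bstar < 1)
    (hHdiag : ∀ i, H i i = 0) :
    frobSq (H * (1 - Bstar)⁻¹) ≤
      2 * frobSq (H * (1 - Bstar)⁻¹ -
        Matrix.diagonal (fun i => (H * (1 - Bstar)⁻¹) i i)) := by
  have hdet : IsUnit (1 - Bstar).det :=
    (isUnit_iff_isUnit_det _).mp (isUnit_one_sub_of_norm_toEuclideanCLM_lt_one hBop)
  have hGB : H * (1 - Bstar)⁻¹ * (1 - Bstar) = H := nonsing_inv_mul_cancel_right _ _ hdet
  have hcol : ∀ i, ∑ k, Bstar k i ^ 2 ≤ 1 := fun i => by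
    have hnorm := sum_norm_sq_col_le_sq_norm_toEuclideanCLM Bstar i
    simp only [Real.norm_eq_abs, sq_abs] at hnorm
    exact hnorm.trans (pow_le_one₀ (norm_nonneg _) hBop.le)
  exact frobSq_le_two_mul_frobSq_offDiag fun i =>
    sq_apply_self_le_sum_sq_offDiag hGB hBdiag hHdiag i (hcol i)
end

section
/- Let Θ*, Θ be symmetric positive definite p×p matrices and Σ̂ a positive semidefinite matrix, and let ℓ(Θ, Σ̂) = Tr(Σ̂Θ) − log det Θ. If ‖Θ − Θ*‖_F ≤ R for some R > 0 and ‖Θ*‖_op ≤ K, then ℓ(Θ, Σ̂) − ℓ(Θ*, Σ̂) ≥ Tr((Σ̂ − (Θ*)⁻¹)(Θ − Θ*)) + (1/2)(K + R)^{−2} ‖Θ − Θ*‖_F². -/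
open Matrix MeasureTheory Finset

/-- Negative Gaussian log-likelihood as a function of the precision matrix. -/
noncomputable def negLogLik {p : ℕ} (Θ Sighat : Matrix (Fin p) (Fin p) ℝ) : ℝ :=
  (Sighat * Θ).trace - Real.log Θ.det

/-!
Write `Δ = Θ - Θ*` and diagonalize `Θ*` and `Δ` simultaneously: `Θ* = W Wᵀ`, `Δ = W diag(ν) Wᵀ`.
Along the segment, `Θ* + tΔ = W diag(1 + tν) Wᵀ`, so the excess
`ℓ(Θ) - ℓ(Θ*) - Tr((Σ̂ - Θ*⁻¹)Δ)` equals `φ 1` for `φ t = ∑ᵢ (t νᵢ - log (1 + t νᵢ))`, where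
`φ 0 = φ' 0 = 0` and `φ'' t = Tr(((Θ* + tΔ)⁻¹ Δ)²)`. Every eigenvalue of `Θ* + tΔ` is at most
`‖Θ*‖_op + ‖Δ‖_F ≤ K + R`, so `φ'' t ≥ (K + R)⁻² ‖Δ‖_F²`, and Taylor's formula concludes.
-/

open Set Real

theorem one_add_mul_pos {ν t : ℝ} (hν : 0 < 1 + ν) (ht : t ∈ Icc (0 : ℝ) 1) : 0 < 1 + t * ν := by
  rcases le_or_gt 0 ν with h | h
  · nlinarith [ht.1]
  · nlinarith [ht.2]

theorem add_deriv_mul_add_le_of_le_deriv2 {f f' f'' : ℝ → ℝ} {a b c : ℝ} (hab : a ≤ b)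
    (hf : ∀ t ∈ Icc a b, HasDerivAt f (f' t) t) (hf' : ∀ t ∈ Icc a b, HasDerivAt f' (f'' t) t)
    (hc : ∀ t ∈ Ioo a b, c ≤ f'' t) :
    f a + f' a * (b - a) + c / 2 * (b - a) ^ 2 ≤ f b := by
  set g : ℝ → ℝ := fun t => f t + f' t * (b - t) + c / 2 * (b - t) ^ 2
  have hg : ∀ t ∈ Icc a b, HasDerivAt g ((b - t) * (f'' t - c)) t := fun t ht => by
    have hbt : HasDerivAt (fun s => b - s) (-1) t := by
      simpa using (hasDerivAt_id t).const_sub b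
    refine (((hf t ht).fun_add ((hf' t ht).fun_mul hbt)).fun_add
      ((hbt.fun_pow 2).const_mul (c / 2))).congr_deriv ?_
    ring
  have hmono : MonotoneOn g (Icc a b) := by
    refine monotoneOn_of_hasDerivWithinAt_nonneg (f' := fun t => (b - t) * (f'' t - c))
      (convex_Icc a b) (fun t ht => (hg t ht).continuousAt.continuousWithinAt)
      (fun t ht => ?_) (fun t ht => ?_)
    · rw [interior_Icc] at ht
      exact (hg t (Ioo_subset_Icc_self ht)).hasDerivWithinAt
    · rw [interior_Icc] at ht
      exact mul_nonneg (by linarith [ht.2]) (by linarith [hc t ht])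
  simpa [g] using hmono (left_mem_Icc.2 hab) (right_mem_Icc.2 hab) hab

theorem half_le_sum_sub_log_one_add {ι : Type*} [Fintype ι] {ν : ι → ℝ} (hν : ∀ i, 0 < 1 + ν i)
    {c : ℝ} (hc : ∀ t ∈ Ioo (0 : ℝ) 1, c ≤ ∑ i, (ν i / (1 + t * ν i)) ^ 2) :
    c / 2 ≤ ∑ i, (ν i - log (1 + ν i)) := by
  have hpos : ∀ t ∈ Icc (0 : ℝ) 1, ∀ i, 0 < 1 + t * ν i := fun t ht i => one_add_mul_pos (hν i) ht
  have hf : ∀ t ∈ Icc (0 : ℝ) 1, HasDerivAt (fun s => ∑ i, (s * ν i - log (1 + s * ν i)))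
      (∑ i, (ν i - ν i / (1 + t * ν i))) t := fun t ht => by
    refine HasDerivAt.fun_sum fun i _ => ?_
    have hlin := hasDerivAt_mul_const (ν i) (x := t)
    simpa using hlin.fun_sub ((hlin.const_add 1).log (hpos t ht i).ne')
  have hf' : ∀ t ∈ Icc (0 : ℝ) 1, HasDerivAt (fun s => ∑ i, (ν i - ν i / (1 + s * ν i)))
      (∑ i, (ν i / (1 + t * ν i)) ^ 2) t := fun t ht => by
    refine HasDerivAt.fun_sum fun i _ => ?_
    have hlin := (hasDerivAt_mul_const (ν i) (x := t)).const_add 1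
    convert (hasDerivAt_const t (ν i)).fun_sub ((hasDerivAt_const t (ν i)).fun_div hlin
      (hpos t ht i).ne') using 1
    field_simp
    ring
  simpa using add_deriv_mul_add_le_of_le_deriv2 zero_le_one hf hf' hc

namespace Matrix

variable {n : Type*} [Fintype n] [DecidableEq n]

theorem le_trace_diagonal_mul_mul_diagonal_mul {Y : Matrix n n ℝ} (hY : Y.IsHermitian)
    {a : n → ℝ} {c : ℝ} (hc : ∀ i j, c ≤ a i * a j) :
    c * (Y * Y).trace ≤ (diagonal a * Y * (diagonal a * Y)).trace := by
  have hsymm : ∀ i j, Y j i = Y i j := fun i j => by simpa using congr_fun₂ hY i j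
  simp only [trace, diag_apply, mul_apply (M := diagonal a * Y), mul_apply (M := Y), diagonal_mul,
    mul_sum]
  refine sum_le_sum fun i _ => sum_le_sum fun j _ => ?_
  rw [hsymm i j]
  nlinarith [mul_le_mul_of_nonneg_right (hc i j) (sq_nonneg (Y i j))]

variable {W : Matrix n n ℝ}

theorem inv_conj_diagonal (hW : IsUnit W) {d : n → ℝ} (hd : ∀ i, d i ≠ 0) :
    (W * diagonal d * Wᵀ)⁻¹ = Wᵀ⁻¹ * diagonal (fun i => (d i)⁻¹) * W⁻¹ := by
  refine inv_eq_left_inv ?_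
  simp only [Matrix.mul_assoc, nonsing_inv_mul_cancel_left _ _ ((isUnit_iff_isUnit_det W).1 hW)]
  simp [← Matrix.mul_assoc, diagonal_mul_diagonal, hd,
    nonsing_inv_mul _ ((isUnit_iff_isUnit_det _).1 ((isUnit_transpose W).2 hW))]

theorem inv_conj_diagonal_mul_conj_diagonal (hW : IsUnit W) {d : n → ℝ} (hd : ∀ i, d i ≠ 0)
    (e : n → ℝ) :
    (W * diagonal d * Wᵀ)⁻¹ * (W * diagonal e * Wᵀ) =
      Wᵀ⁻¹ * diagonal (fun i => e i / d i) * Wᵀ := by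
  rw [inv_conj_diagonal hW hd]
  simp only [Matrix.mul_assoc, nonsing_inv_mul_cancel_left _ _ ((isUnit_iff_isUnit_det W).1 hW)]
  simp [← Matrix.mul_assoc, diagonal_mul_diagonal, div_eq_inv_mul]

theorem trace_pow_inv_conj_diagonal_mul_conj_diagonal (hW : IsUnit W) {d : n → ℝ}
    (hd : ∀ i, d i ≠ 0) (e : n → ℝ) (k : ℕ) :
    (((W * diagonal d * Wᵀ)⁻¹ * (W * diagonal e * Wᵀ)) ^ k).trace = ∑ i, (e i / d i) ^ k := by
  rw [inv_conj_diagonal_mul_conj_diagonal hW hd, ← ((isUnit_transpose W).2 hW).unit_spec,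
    ← coe_units_inv, Units.conj_pow', trace_units_conj', diagonal_pow, trace_diagonal]
  rfl

theorem trace_inv_mul_conj_diagonal (hW : IsUnit W) (e : n → ℝ) :
    ((W * Wᵀ)⁻¹ * (W * diagonal e * Wᵀ)).trace = ∑ i, e i := by
  simpa using trace_pow_inv_conj_diagonal_mul_conj_diagonal hW (d := fun _ => 1) (by simp) e 1

theorem det_conj_diagonal (d : n → ℝ) : (W * diagonal d * Wᵀ).det = (W * Wᵀ).det * ∏ i, d i := by
  simp only [det_mul, det_diagonal]
  ring

theorem log_det_conj_diagonal (hW : IsUnit W) {d : n → ℝ} (hd : ∀ i, 0 < d i) :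
    Real.log (W * diagonal d * Wᵀ).det = Real.log (W * Wᵀ).det + ∑ i, Real.log (d i) := by
  have hWW : (W * Wᵀ).det ≠ 0 := by
    simpa [det_mul, det_transpose] using ((isUnit_iff_isUnit_det W).1 hW).ne_zero
  rw [det_conj_diagonal, Real.log_mul hWW (prod_pos fun i _ => hd i).ne',
    Real.log_prod fun i _ => (hd i).ne']

theorem posDef_conj_diagonal_iff (hW : IsUnit W) {d : n → ℝ} :
    (W * diagonal d * Wᵀ).PosDef ↔ ∀ i, 0 < d i :=
  (IsUnit.posDef_star_right_conjugate_iff hW).trans posDef_diagonal_iff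

theorem conj_add_smul_conj_diagonal (ν : n → ℝ) (t : ℝ) :
    W * Wᵀ + t • (W * diagonal ν * Wᵀ) = W * diagonal (fun i => 1 + t * ν i) * Wᵀ := by
  have : diagonal (fun i => 1 + t * ν i) = 1 + t • diagonal ν := by
    rw [← diagonal_one, ← diagonal_smul, diagonal_add]
    rfl
  rw [this, Matrix.mul_add, Matrix.add_mul, Matrix.mul_one, Matrix.mul_smul, Matrix.smul_mul]

theorem IsHermitian.exists_orthogonal_conj_diagonal {M : Matrix n n ℝ} (hM : M.IsHermitian) :
    ∃ U : Matrix n n ℝ, Uᵀ * U = 1 ∧ U * Uᵀ = 1 ∧ M = U * diagonal hM.eigenvalues * Uᵀ := by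
  refine ⟨hM.eigenvectorUnitary, ?_, ?_, by simpa [star_eq_conjTranspose] using hM.spectral_theorem⟩
  all_goals simp [← conjTranspose_eq_transpose_of_trivial, ← star_eq_conjTranspose]

theorem PosDef.inv_sq_mul_trace_mul_self_le {M X : Matrix n n ℝ} (hM : M.PosDef)
    (hX : X.IsHermitian) {L : ℝ} (hL : ∀ i, hM.1.eigenvalues i ≤ L) :
    (L ^ 2)⁻¹ * (X * X).trace ≤ ((M⁻¹ * X) ^ 2).trace := by
  obtain ⟨U, hUU, hUU', hMU⟩ := hM.1.exists_orthogonal_conj_diagonal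
  set d := hM.1.eigenvalues
  have hd : ∀ i, 0 < d i := hM.eigenvalues_pos
  have hU : IsUnit U := (isUnit_iff_isUnit_det U).2 (isUnit_det_of_left_inverse hUU)
  have hMinv : M⁻¹ = U * diagonal (fun i => (d i)⁻¹) * Uᵀ := by
    have hUinv : U⁻¹ = Uᵀ := inv_eq_left_inv hUU
    rw [hMU, inv_conj_diagonal hU fun i => (hd i).ne', hUinv, ← transpose_nonsing_inv, hUinv,
      transpose_transpose]
  -- In an eigenbasis of `M`, both traces are sums of `Y i j ^ 2` with weights `1`, `(d i * d j)⁻¹`.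
  set Y := Uᵀ * X * U
  have hY : Y.IsHermitian := by simpa using isHermitian_conjTranspose_mul_mul U hX
  have hMXMX : ((M⁻¹ * X) ^ 2).trace =
      (diagonal (fun i => (d i)⁻¹) * Y * (diagonal (fun i => (d i)⁻¹) * Y)).trace := by
    rw [sq, hMinv, ← trace_conj' hU, inv_eq_left_inv hUU]
    simp only [Y, Matrix.mul_assoc]
    rw [← Matrix.mul_assoc Uᵀ U, hUU, Matrix.one_mul]
  have hXX : (X * X).trace = (Y * Y).trace := by
    rw [← trace_conj' hU, inv_eq_left_inv hUU]
    simp only [Y, Matrix.mul_assoc]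
    rw [← Matrix.mul_assoc U Uᵀ, hUU', Matrix.one_mul]
  rw [hMXMX, hXX]
  refine le_trace_diagonal_mul_mul_diagonal_mul hY fun i j => ?_
  rw [← mul_inv, sq]
  exact inv_anti₀ (mul_pos (hd i) (hd j))
    (mul_le_mul (hL i) (hL j) (hd j).le ((hd i).le.trans (hL i)))

open scoped MatrixOrder in
theorem PosDef.exists_conj_diagonal {A B : Matrix n n ℝ} (hA : A.PosDef) (hB : B.IsHermitian) :
    ∃ W : Matrix n n ℝ, IsUnit W ∧ ∃ ν : n → ℝ, A = W * Wᵀ ∧ B = W * diagonal ν * Wᵀ := by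
  set S := CFC.sqrt A
  have hS : Sᵀ = S := IsSymm.eq (by simpa using (CFC.sqrt_nonneg A).posSemidef.1)
  have hSS : S * S = A := CFC.sqrt_mul_sqrt_self A hA.posSemidef.nonneg
  have hSunit : IsUnit S := (CFC.isUnit_sqrt_iff A hA.posSemidef.nonneg).2 hA.isUnit
  set C := S⁻¹ * B * S⁻¹
  have hC : C.IsHermitian := by
    simpa [hS, transpose_nonsing_inv] using isHermitian_conjTranspose_mul_mul S⁻¹ hB
  obtain ⟨U, hUU, hUU', hCU⟩ := hC.exists_orthogonal_conj_diagonal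
  have hU : IsUnit U := (isUnit_iff_isUnit_det U).2 (isUnit_det_of_left_inverse hUU)
  refine ⟨S * U, hSunit.mul hU, hC.eigenvalues, ?_, ?_⟩
  · rw [transpose_mul, hS, Matrix.mul_assoc, ← Matrix.mul_assoc U, hUU', Matrix.one_mul, hSS]
  · have hSdet := (isUnit_iff_isUnit_det S).1 hSunit
    calc B = S * C * S := by
          rw [Matrix.mul_assoc, Matrix.mul_assoc, nonsing_inv_mul S hSdet, Matrix.mul_one,
            mul_nonsing_inv_cancel_left S B hSdet]
      _ = S * (U * diagonal hC.eigenvalues * Uᵀ) * S := congrArg (fun X => S * X * S) hCU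
      _ = S * U * diagonal hC.eigenvalues * (S * U)ᵀ := by
        rw [transpose_mul, hS]
        simp only [Matrix.mul_assoc]

end Matrix

section FinDim

variable {p : ℕ}

theorem frobSq_eq_trace_mul_self {X : Matrix (Fin p) (Fin p) ℝ} (hX : X.IsHermitian) :
    frobSq X = (X * X).trace := by
  have hsymm : ∀ i j, X j i = X i j := fun i j => by simpa using congr_fun₂ hX i j
  simp only [frobSq, trace, diag_apply, mul_apply, hsymm, sq]

theorem opNorm_add_le (A B : Matrix (Fin p) (Fin p) ℝ) : opNorm (A + B) ≤ opNorm A + opNorm B := by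
  simpa only [opNorm, map_add] using norm_add_le _ _

theorem opNorm_smul (t : ℝ) (A : Matrix (Fin p) (Fin p) ℝ) : opNorm (t • A) = |t| * opNorm A := by
  simp [opNorm, norm_smul]

theorem opNorm_le_sqrt_frobSq (A : Matrix (Fin p) (Fin p) ℝ) : opNorm A ≤ √(frobSq A) := by
  refine ContinuousLinearMap.opNorm_le_bound _ (sqrt_nonneg _) fun x => ?_
  rw [EuclideanSpace.norm_eq, EuclideanSpace.norm_eq, ← sqrt_mul (by unfold frobSq; positivity)]
  refine sqrt_le_sqrt ?_
  rw [frobSq, sum_mul]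
  simp only [ofLp_toEuclideanCLM, mulVec, dotProduct, Real.norm_eq_abs, sq_abs]
  exact sum_le_sum fun i _ => sum_mul_sq_le_sq_mul_sq _ _ _

theorem Matrix.IsHermitian.eigenvalues_le_opNorm {M : Matrix (Fin p) (Fin p) ℝ}
    (hM : M.IsHermitian) (i : Fin p) : hM.eigenvalues i ≤ opNorm M := by
  have : Nonempty (Fin p) := ⟨i⟩
  have hmem : hM.eigenvalues i ∈ spectrum ℝ (toEuclideanCLM (𝕜 := ℝ) M) := by
    rw [AlgEquiv.spectrum_eq]
    exact hM.eigenvalues_mem_spectrum_real i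
  exact (le_abs_self _).trans (by simpa [opNorm] using spectrum.norm_le_norm_of_mem hmem)

theorem Matrix.IsHermitian.eigenvalues_le_opNorm_add_sqrt_frobSq
    {A B : Matrix (Fin p) (Fin p) ℝ} {t : ℝ} (hM : (A + t • B).IsHermitian) (ht : |t| ≤ 1)
    (i : Fin p) : hM.eigenvalues i ≤ opNorm A + √(frobSq B) := calc
  _ ≤ opNorm (A + t • B) := hM.eigenvalues_le_opNorm i
  _ ≤ opNorm A + |t| * opNorm B := (opNorm_add_le _ _).trans_eq (by rw [opNorm_smul])
  _ ≤ opNorm A + √(frobSq B) := by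
    gcongr
    exact (mul_le_of_le_one_left (norm_nonneg _) ht).trans (opNorm_le_sqrt_frobSq B)

theorem Matrix.PosDef.inv_sq_mul_frobSq_le_trace_inv_mul_sq {A B : Matrix (Fin p) (Fin p) ℝ}
    {t L : ℝ} (hM : (A + t • B).PosDef) (hB : B.IsHermitian) (ht : |t| ≤ 1)
    (hL : opNorm A + √(frobSq B) ≤ L) :
    (L ^ 2)⁻¹ * frobSq B ≤ (((A + t • B)⁻¹ * B) ^ 2).trace :=
  frobSq_eq_trace_mul_self hB ▸ hM.inv_sq_mul_trace_mul_self_le hB fun i =>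
    (hM.1.eigenvalues_le_opNorm_add_sqrt_frobSq ht i).trans hL

end FinDim

theorem stmt_11_general {p : ℕ} (Θstar Θ Sighat : Matrix (Fin p) (Fin p) ℝ)
    (hstar : Θstar.PosDef) (hΘ : Θ.PosDef)
    (R K : ℝ) (hfr : Real.sqrt (frobSq (Θ - Θstar)) ≤ R)
    (hK : opNorm Θstar ≤ K) :
    ((Sighat - Θstar⁻¹) * (Θ - Θstar)).trace +
        (1 / 2) * ((K + R) ^ 2)⁻¹ * frobSq (Θ - Θstar) ≤
      negLogLik Θ Sighat - negLogLik Θstar Sighat := by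
  set Δ := Θ - Θstar
  have hΔ : Δ.IsHermitian := hΘ.1.sub hstar.1
  obtain ⟨W, hW, ν, hstarW, hΔW⟩ := hstar.exists_conj_diagonal hΔ
  have hpath : ∀ t : ℝ, Θstar + t • Δ = W * diagonal (fun i => 1 + t * ν i) * Wᵀ := fun t => by
    rw [hstarW, hΔW, conj_add_smul_conj_diagonal]
  have hΘW : Θ = W * diagonal (fun i => 1 + ν i) * Wᵀ := by simpa [Δ] using hpath 1
  have hν : ∀ i, 0 < 1 + ν i := (posDef_conj_diagonal_iff hW).1 (hΘW ▸ hΘ)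
  have hlogdet : log Θ.det = log Θstar.det + ∑ i, log (1 + ν i) := by
    rw [hΘW, hstarW, log_det_conj_diagonal hW hν]
  have htrace : (Θstar⁻¹ * Δ).trace = ∑ i, ν i := by
    rw [hstarW, hΔW, trace_inv_mul_conj_diagonal hW]
  have hcurv : ∀ t ∈ Ioo (0 : ℝ) 1,
      ((K + R) ^ 2)⁻¹ * frobSq Δ ≤ ∑ i, (ν i / (1 + t * ν i)) ^ 2 := fun t ht => by
    have hpos : ∀ i, 0 < 1 + t * ν i := fun i => one_add_mul_pos (hν i) (Ioo_subset_Icc_self ht)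
    have hM : (Θstar + t • Δ).PosDef := hpath t ▸ (posDef_conj_diagonal_iff hW).2 hpos
    calc ((K + R) ^ 2)⁻¹ * frobSq Δ ≤ (((Θstar + t • Δ)⁻¹ * Δ) ^ 2).trace :=
          hM.inv_sq_mul_frobSq_le_trace_inv_mul_sq hΔ (abs_le.2 ⟨by linarith [ht.1], ht.2.le⟩)
            (add_le_add hK hfr)
      _ = ∑ i, (ν i / (1 + t * ν i)) ^ 2 := by
          rw [hpath t, hΔW, trace_pow_inv_conj_diagonal_mul_conj_diagonal hW fun i => (hpos i).ne']
  have hmain := half_le_sum_sub_log_one_add hν hcurv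
  rw [sum_sub_distrib] at hmain
  have hSighat : (Sighat * Δ).trace = (Sighat * Θ).trace - (Sighat * Θstar).trace := by
    rw [Matrix.mul_sub, trace_sub]
  simp only [negLogLik, hlogdet, Matrix.sub_mul, trace_sub, htrace, hSighat]
  linarith

theorem stmt_11 {p : ℕ} (Θstar Θ Sighat : Matrix (Fin p) (Fin p) ℝ)
    (hstar : Θstar.PosDef) (hΘ : Θ.PosDef) (hSig : Sighat.PosSemidef)
    (R K : ℝ) (hR : 0 < R) (hfr : Real.sqrt (frobSq (Θ - Θstar)) ≤ R)
    (hK : opNorm Θstar ≤ K) :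
    ((Sighat - Θstar⁻¹) * (Θ - Θstar)).trace +
        (1 / 2) * ((K + R) ^ 2)⁻¹ * frobSq (Θ - Θstar) ≤
      negLogLik Θ Sighat - negLogLik Θstar Sighat :=
  stmt_11_general Θstar Θ Sighat hstar hΘ R K hfr hK
end
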